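/- Lift lemma: let φ : V → ℝ and define f : Ω → ℝ by f(η) = Σ_{x∈V} φ(x) η(x). Then E_ZRP(f,f) = μ(Ω̂) · E_P(φ,φ), where μ(Ω̂) = Σ_{ξ : Σ_x ξ(x)=m−1} μ(ξ). -/
import Mathlib


open Finset

variable (V : Type*) [Fintype V] [DecidableEq V]

/-- Product-form (unnormalized) stationary weight of a configuration. -/
noncomputable def weight (π : V → ℝ) (r : V → ℕ → ℝ) (η : V → ℕ) : ℝ :=
  ∏ x, ∏ k ∈ Finset.Icc 1 (η x), π x / r x k

/-- Add one particle at site `x` : the configuration `η + δ_x`. -/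
def addOne (η : V → ℕ) (x : V) : V → ℕ := Function.update η x (η x + 1)

/-- Move a particle from `x` to `y`: the configuration `η + δ_y - δ_x`. -/
def move (η : V → ℕ) (x y : V) : V → ℕ :=
  addOne V (Function.update η x (η x - 1)) y

/-- The set of configurations of `m` particles on `V`. -/
def configs (m : ℕ) : Finset (V → ℕ) :=
  (Fintype.piFinset fun _ : V => Finset.range (m + 1)).filter fun η => ∑ x, η x = m

/-- Single-particle Dirichlet form `⟨φ, (I - P) ψ⟩_π`. -/
noncomputable def EP (π : V → ℝ) (P : V → V → ℝ) (φ ψ : V → ℝ) : ℝ :=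
  ∑ x, ∑ y, π x * P x y * (φ x * (ψ x - ψ y))

/-- Zero-range Dirichlet form with jump matrix `P`, rates `r` and measure `μ`
on configurations with `m` particles. -/
noncomputable def EZRP (P : V → V → ℝ) (r : V → ℕ → ℝ) (μ : (V → ℕ) → ℝ) (m : ℕ)
    (f g : (V → ℕ) → ℝ) : ℝ :=
  ∑ η ∈ configs V m, ∑ x, ∑ y,
    μ η * r x (η x) * P x y * (f η * (g η - g (move V η x y)))

/-- Mean of an observable on `m`-particle configurations under `μ`. -/
noncomputable def meanOn (m : ℕ) (μ : (V → ℕ) → ℝ) (f : (V → ℕ) → ℝ) : ℝ :=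
  ∑ η ∈ configs V m, μ η * f η

/-- Variance of an observable on `m`-particle configurations under `μ`. -/
noncomputable def varOn (m : ℕ) (μ : (V → ℕ) → ℝ) (f : (V → ℕ) → ℝ) : ℝ :=
  meanOn V m μ (fun η => (f η) ^ 2) - (meanOn V m μ f) ^ 2

/-- Variance of `φ : V → ℝ` under the probability vector `π`. -/
noncomputable def varPi (π : V → ℝ) (φ : V → ℝ) : ℝ :=
  ∑ x, π x * (φ x) ^ 2 - (∑ x, π x * φ x) ^ 2

section Aux

variable {V}

lemma mem_configs_iff (m : ℕ) (η : V → ℕ) : η ∈ configs V m ↔ ∑ x, η x = m := by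
  constructor
  · intro h; exact (Finset.mem_filter.mp h).2
  · intro h
    refine Finset.mem_filter.mpr ⟨?_, h⟩
    refine Fintype.mem_piFinset.mpr fun x => Finset.mem_range.mpr ?_
    exact Nat.lt_succ_of_le
      (h ▸ Finset.single_le_sum (fun i _ => Nat.zero_le _) (Finset.mem_univ x))

lemma sum_addOne (ξ : V → ℕ) (x : V) : ∑ z, addOne V ξ x z = (∑ z, ξ z) + 1 := by
  unfold addOne
  rw [Finset.sum_update_of_mem (Finset.mem_univ x), Finset.sdiff_singleton_eq_erase]
  have h := Finset.add_sum_erase Finset.univ ξ (Finset.mem_univ x)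
  omega

lemma sum_subOne (η : V → ℕ) (x : V) (hx : 1 ≤ η x) :
    ∑ z, Function.update η x (η x - 1) z = (∑ z, η z) - 1 := by
  rw [Finset.sum_update_of_mem (Finset.mem_univ x), Finset.sdiff_singleton_eq_erase]
  have h := Finset.add_sum_erase Finset.univ η (Finset.mem_univ x)
  omega

lemma F_addOne (φ : V → ℝ) (ξ : V → ℕ) (x : V) :
    ∑ z, φ z * ((addOne V ξ x z : ℕ) : ℝ) = (∑ z, φ z * (ξ z : ℝ)) + φ x := by
  have key : ∀ z, φ z * ((addOne V ξ x z : ℕ) : ℝ)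
      = φ z * (ξ z : ℝ) + (if z = x then φ x else 0) := by
    intro z
    by_cases hz : z = x
    · subst hz; simp [addOne]; ring
    · simp [addOne, Function.update_apply, hz]
  rw [Finset.sum_congr rfl fun z _ => key z, Finset.sum_add_distrib]
  simp

lemma move_addOne (ξ : V → ℕ) (x y : V) :
    move V (addOne V ξ x) x y = addOne V ξ y := by
  unfold move addOne
  simp [Function.update_idem, Function.update_self, Function.update_eq_self]

lemma weight_addOne (π : V → ℝ) (r : V → ℕ → ℝ) (ξ : V → ℕ) (x : V) :
    weight V π r (addOne V ξ x) = weight V π r ξ * (π x / r x (ξ x + 1)) := by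
  unfold weight
  rw [Fintype.prod_eq_mul_prod_compl x, Fintype.prod_eq_mul_prod_compl x
    (fun z => ∏ k ∈ Finset.Icc 1 (ξ z), π z / r z k)]
  have h1 : addOne V ξ x x = ξ x + 1 := by simp [addOne]
  have h2 : ∏ z ∈ ({x}ᶜ : Finset V), ∏ k ∈ Finset.Icc 1 (addOne V ξ x z), π z / r z k
      = ∏ z ∈ ({x}ᶜ : Finset V), ∏ k ∈ Finset.Icc 1 (ξ z), π z / r z k := by
    refine Finset.prod_congr rfl fun z hz => ?_
    have hzx : z ≠ x := by simpa using hz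
    simp [addOne, Function.update_apply, hzx]
  rw [h1, h2, Finset.prod_Icc_succ_top (by omega : 1 ≤ ξ x + 1)]
  ring

end Aux

/-- the lift lemma, E_ZRP(f,f) = μ(Ω̂)·E_P(φ,φ) for f(η) = Σ φ(x)η(x). -/
theorem zrp_lift_lemma
    (m : ℕ) (hm : 1 ≤ m)
    (π : V → ℝ) (hπ : ∀ x, 0 < π x) (hπ1 : ∑ x, π x = 1)
    (P : V → V → ℝ) (hP0 : ∀ x y, 0 ≤ P x y) (hProw : ∀ x, ∑ y, P x y = 1)
    (hstat : ∀ y, ∑ x, π x * P x y = π y)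
    (r : V → ℕ → ℝ) (hr : ∀ x k, 1 ≤ k → 0 < r x k) (hr0 : ∀ x, r x 0 = 0)
    (Z : ℝ) (hZ : 0 < Z)
    (μ : (V → ℕ) → ℝ) (hμ : ∀ η, μ η = weight V π r η / Z)
    (φ : V → ℝ) :
    EZRP V P r μ m (fun η => ∑ x, φ x * η x) (fun η => ∑ x, φ x * η x)
      = (∑ ξ ∈ configs V (m - 1), μ ξ) * EP V π P φ φ := by
  classical
  obtain ⟨n, rfl⟩ : ∃ n, m = n + 1 := ⟨m - 1, (Nat.succ_pred_eq_of_pos hm).symm⟩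
  have hconf : (n + 1 - 1) = n := rfl
  rw [hconf]
  set F : (V → ℕ) → ℝ := fun η => ∑ x, φ x * (η x : ℝ) with hF
  have hFadd : ∀ (ξ : V → ℕ) (x : V), F (addOne V ξ x) = F ξ + φ x := by
    intro ξ x; simpa [hF] using F_addOne φ ξ x
  have hμr : ∀ (ξ : V → ℕ) (x : V),
      μ (addOne V ξ x) * r x (ξ x + 1) = π x * μ ξ := by
    intro ξ x
    have hrpos : r x (ξ x + 1) ≠ 0 := ne_of_gt (hr x (ξ x + 1) (by omega))
    rw [hμ, hμ, weight_addOne]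
    field_simp
  -- zero-sum fact
  have hzero : ∑ x, ∑ y, π x * P x y * (φ x - φ y) = 0 := by
    have h1 : ∑ x, ∑ y, π x * P x y * φ x = ∑ x, π x * φ x := by
      refine Finset.sum_congr rfl fun x _ => ?_
      have : ∑ y, π x * P x y * φ x = (∑ y, P x y) * (π x * φ x) := by
        rw [Finset.sum_mul]; exact Finset.sum_congr rfl fun y _ => by ring
      rw [this, hProw]; ring
    have h2 : ∑ x, ∑ y, π x * P x y * φ y = ∑ x, π x * φ x := by
      rw [Finset.sum_comm]
      refine Finset.sum_congr rfl fun y _ => ?_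
      have : ∑ x, π x * P x y * φ y = (∑ x, π x * P x y) * φ y := by
        rw [Finset.sum_mul]
      rw [this, hstat]
    simp only [mul_sub, Finset.sum_sub_distrib]
    rw [h1, h2, sub_self]
  have key : ∀ c : ℝ, ∑ x, ∑ y, π x * P x y * ((c + φ x) * (φ x - φ y)) = EP V π P φ φ := by
    intro c
    have expand : ∀ x y : V, π x * P x y * ((c + φ x) * (φ x - φ y))
        = c * (π x * P x y * (φ x - φ y)) + π x * P x y * (φ x * (φ x - φ y)) :=
      fun x y => by ring
    simp only [expand, Finset.sum_add_distrib, ← Finset.mul_sum, hzero, mul_zero, zero_add]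
    rfl
  -- main reindexing
  show (∑ η ∈ configs V (n + 1), ∑ x, ∑ y,
      μ η * r x (η x) * P x y * (F η * (F η - F (move V η x y))))
    = (∑ ξ ∈ configs V n, μ ξ) * EP V π P φ φ
  rw [Finset.sum_comm]
  have hx : ∀ x : V,
      (∑ η ∈ configs V (n + 1), ∑ y,
        μ η * r x (η x) * P x y * (F η * (F η - F (move V η x y))))
      = ∑ ξ ∈ configs V n, ∑ y,
          π x * μ ξ * P x y * ((F ξ + φ x) * (φ x - φ y)) := by
    intro x
    rw [← Finset.sum_filter_of_ne (p := fun η => 1 ≤ η x) ?side]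
    case side =>
      intro η _ hne
      by_contra hlt
      have h0 : η x = 0 := by omega
      exact hne (by simp [h0, hr0])
    refine (Finset.sum_nbij' (fun ξ => addOne V ξ x)
      (fun η => Function.update η x (η x - 1)) ?_ ?_ ?_ ?_ ?_).symm
    · intro ξ hξ
      have hξs := (mem_configs_iff n ξ).mp hξ
      refine Finset.mem_filter.mpr ⟨(mem_configs_iff (n+1) _).mpr ?_, ?_⟩
      · rw [sum_addOne, hξs]
      · simp [addOne]
    · intro η hη
      obtain ⟨hηm, hη1⟩ := Finset.mem_filter.mp hη
      have hηs := (mem_configs_iff (n+1) η).mp hηm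
      refine (mem_configs_iff n _).mpr ?_
      rw [sum_subOne η x hη1, hηs]
      omega
    · intro ξ _
      simp [addOne, Function.update_idem, Function.update_eq_self]
    · intro η hη
      obtain ⟨_, hη1⟩ := Finset.mem_filter.mp hη
      simp only [addOne, Function.update_self, Function.update_idem,
        Nat.sub_add_cancel hη1, Function.update_eq_self]
    · intro ξ _
      refine Finset.sum_congr rfl fun y _ => ?_
      have h1 : addOne V ξ x x = ξ x + 1 := by simp [addOne]
      simp only [move_addOne, hFadd, h1]
      rw [hμr]
      ring
  rw [Finset.sum_congr rfl fun x _ => hx x, Finset.sum_comm, Finset.sum_mul]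
  refine Finset.sum_congr rfl fun ξ _ => ?_
  have factor : ∀ x y : V, π x * μ ξ * P x y * ((F ξ + φ x) * (φ x - φ y))
      = μ ξ * (π x * P x y * ((F ξ + φ x) * (φ x - φ y))) := fun x y => by ring
  simp only [factor, ← Finset.mul_sum]
  rw [key (F ξ)]
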